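/- For every n ≥ 2 and every natural number j, the number of minimal factorizations F ∈ 𝔐_n with M_1(F) = j equals the number of minimal factorizations F ∈ 𝔐_n with T_1(F) = j. -/

import Mathlib

/-- `F` is a minimal factorization of size `n`, i.e. a factorization of the cycle
`(1,2,…,n)` (represented as `finRotate n` on `Fin n`, where the element `i ∈ {1,…,n}`
corresponds to the index `i-1 : Fin n`) into `n-1` transpositions: each `F k` is a
transposition and the left-to-right product `τ₁ τ₂ ⋯ τ_{n-1}` (apply `τ₁` first)
equals the cycle. -/
def IsMinFact (n : ℕ) (F : Fin (n - 1) → Equiv.Perm (Fin n)) : Prop :=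
  (∀ k, (F k).IsSwap) ∧ (List.ofFn F).reverse.prod = finRotate n

/-- `T(F, x)`: the number of transpositions in `F` moving the element represented by `x`. -/
def Tcount {n : ℕ} (F : Fin (n - 1) → Equiv.Perm (Fin n)) (x : Fin n) : ℕ :=
  (Finset.univ.filter fun k : Fin (n - 1) => F k x ≠ x).card

/-- `M(F, x)`: the number of indices `1 ≤ k ≤ n-1` with `τ₁⋯τ_{k-1}(x) ≠ τ₁⋯τ_k(x)`,
i.e. the number of transpositions affecting the trajectory of `x` (left-to-right
partial products, so `τ₁⋯τ_k` is the product of the first `k` entries, applied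
`τ₁` first). -/
def Mcount {n : ℕ} (F : Fin (n - 1) → Equiv.Perm (Fin n)) (x : Fin n) : ℕ :=
  (Finset.univ.filter fun k : Fin (n - 1) =>
    ((List.ofFn F).take k.val).reverse.prod x ≠
      ((List.ofFn F).take (k.val + 1)).reverse.prod x).card

/-!
Conjugating each factor `τ_k` by the partial product `τ_1 ⋯ τ_{k-1}` of the factors before it
yields a transposition that moves `x` exactly when `τ_k` moves the current position of `x`, and
the conjugated factors, multiplied in the opposite order, telescope back to `τ_1 ⋯ τ_{n-1}`.
So "conjugate, then reverse" is a bijection of `𝔐_n` carrying `M_1` to `T_1`.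
-/

open Equiv

lemma isSwap_inv_mul_mul_iff {α : Type*} [DecidableEq α] (σ τ : Perm α) :
    (σ⁻¹ * τ * σ).IsSwap ↔ τ.IsSwap := by
  have conj : ∀ π ρ : Perm α, ρ.IsSwap → (π⁻¹ * ρ * π).IsSwap := by
    rintro π ρ ⟨x, y, hxy, rfl⟩
    refine ⟨π⁻¹ x, π⁻¹ y, by simpa using hxy, ?_⟩
    rw [swap_apply_apply, inv_inv]
  refine ⟨fun h => ?_, conj σ τ⟩
  simpa [mul_assoc] using conj σ⁻¹ _ h

lemma List.ofFn_comp_rev {β : Type*} {m : ℕ} (f : Fin m → β) :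
    List.ofFn (f ∘ Fin.rev) = (List.ofFn f).reverse := by
  refine List.ext_getElem (by simp) fun i h₁ h₂ => ?_
  simp only [List.getElem_ofFn, List.getElem_reverse, List.length_ofFn, Function.comp_apply]
  congr 1
  ext
  simp only [Fin.val_rev, List.length_ofFn] at h₁ ⊢
  omega

section PrefixProducts

variable {α : Type*} {m : ℕ}

-- The paper's left-to-right product `τ_1 ⋯ τ_k`.
def prefixProd (F : Fin m → Perm α) (k : ℕ) : Perm α :=
  ((List.ofFn F).take k).reverse.prod

@[simp]
lemma prefixProd_zero (F : Fin m → Perm α) : prefixProd F 0 = 1 := by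
  simp [prefixProd]

lemma prefixProd_succ (F : Fin m → Perm α) (k : Fin m) :
    prefixProd F (k + 1) = F k * prefixProd F k := by
  simp [prefixProd, List.take_add_one]

lemma prefixProd_length (F : Fin m → Perm α) :
    prefixProd F m = (List.ofFn F).reverse.prod := by
  rw [prefixProd, List.take_of_length_le (by simp)]

def conjPrefix (F : Fin m → Perm α) (k : Fin m) : Perm α :=
  (prefixProd F k)⁻¹ * F k * prefixProd F k

def unconjPrefix (G : Fin m → Perm α) (k : Fin m) : Perm α :=
  Fin.partialProd G k.succ * (Fin.partialProd G k.castSucc)⁻¹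

lemma partialProd_conjPrefix (F : Fin m → Perm α) (i : Fin (m + 1)) :
    Fin.partialProd (conjPrefix F) i = prefixProd F i := by
  induction i using Fin.induction with
  | zero => simp
  | succ i ih =>
    rw [Fin.partialProd_succ, ih, conjPrefix, Fin.val_succ, Fin.val_castSucc, prefixProd_succ]
    group

lemma prefixProd_unconjPrefix (G : Fin m → Perm α) (i : Fin (m + 1)) :
    prefixProd (unconjPrefix G) i = Fin.partialProd G i := by
  induction i using Fin.induction with
  | zero => simp
  | succ i ih =>
    rw [Fin.val_succ, prefixProd_succ, ← Fin.val_castSucc, ih, unconjPrefix]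
    group

def conjPrefixEquiv : (Fin m → Perm α) ≃ (Fin m → Perm α) where
  toFun := conjPrefix
  invFun := unconjPrefix
  left_inv F := by
    funext k
    rw [unconjPrefix, partialProd_conjPrefix, partialProd_conjPrefix, Fin.val_succ,
      Fin.val_castSucc, prefixProd_succ, mul_inv_cancel_right]
  right_inv G := by
    funext k
    rw [conjPrefix, ← Fin.val_castSucc, prefixProd_unconjPrefix, unconjPrefix, mul_assoc,
      inv_mul_cancel_right, Fin.partialProd_right_inv]

lemma prod_conjPrefix (F : Fin m → Perm α) :
    (List.ofFn (conjPrefix F)).prod = (List.ofFn F).reverse.prod := by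
  have := partialProd_conjPrefix F (Fin.last m)
  rw [Fin.partialProd, Fin.val_last, List.take_of_length_le (by simp)] at this
  rw [this, prefixProd_length]

lemma conjPrefix_apply_eq_iff (F : Fin m → Perm α) (k : Fin m) (x : α) :
    conjPrefix F k x = x ↔ prefixProd F (k + 1) x = prefixProd F k x := by
  rw [conjPrefix, Perm.mul_apply, Perm.mul_apply, Perm.inv_eq_iff_eq, prefixProd_succ,
    Perm.mul_apply, eq_comm]

end PrefixProducts

lemma Tcount_conjPrefix {n : ℕ} (F : Fin (n - 1) → Perm (Fin n)) (x : Fin n) :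
    Tcount (conjPrefix F) x = Mcount F x := by
  refine congrArg Finset.card (Finset.filter_congr fun k _ => ?_)
  rw [ne_eq, conjPrefix_apply_eq_iff, eq_comm]
  rfl

lemma Tcount_comp_rev {n : ℕ} (F : Fin (n - 1) → Perm (Fin n)) (x : Fin n) :
    Tcount (F ∘ Fin.rev) x = Tcount F x :=
  Finset.card_equiv Fin.revPerm (by simp)

lemma isMinFact_conjPrefix_comp_rev_iff {n : ℕ} (F : Fin (n - 1) → Perm (Fin n)) :
    IsMinFact n (conjPrefix F ∘ Fin.rev) ↔ IsMinFact n F := by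
  simp only [IsMinFact, List.ofFn_comp_rev, List.reverse_reverse, prod_conjPrefix,
    Function.comp_apply, conjPrefix, isSwap_inv_mul_mul_iff]
  exact and_congr_left' (Fin.rev_surjective.forall (p := fun k => (F k).IsSwap)).symm

/-- the number of minimal factorizations with `M_1 = j` equals the
number of minimal factorizations with `T_1 = j` (the element `1` of `{1,…,n}` is
the index `0 : Fin n`). -/
theorem card_M1_eq_card_T1 (n : ℕ) (hn : 2 ≤ n) (j : ℕ) :
    Nat.card {F : Fin (n - 1) → Equiv.Perm (Fin n) //
      IsMinFact n F ∧ Mcount F ⟨0, by omega⟩ = j} =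
    Nat.card {F : Fin (n - 1) → Equiv.Perm (Fin n) //
      IsMinFact n F ∧ Tcount F ⟨0, by omega⟩ = j} := by
  let e : (Fin (n - 1) → Perm (Fin n)) ≃ _ :=
    conjPrefixEquiv.trans (Fin.revPerm.arrowCongr (Equiv.refl (Perm (Fin n))))
  refine Nat.card_congr (e.subtypeEquiv fun F => ?_)
  have he : e F = conjPrefix F ∘ Fin.rev := rfl
  rw [he, isMinFact_conjPrefix_comp_rev_iff, Tcount_comp_rev, Tcount_conjPrefix]
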